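/- Let G be a group and n ≥ 2. Every element of the canonical copy of G^n in G^n ⋊ Sₙ is congruent modulo N (the normal closure of Sₙ) to an element of the form (g,1,...,1, id) with g ∈ G, and two such elements (g,1,...,1,id) and (h,1,...,1,id) are congruent modulo N if and only if g⁻¹h ∈ [G,G]. -/

import Mathlib

/-!
Conjugating by a permutation moves a coordinate of `Gⁿ` to any other position, so modulo `N`
the element `(1, …, a, …, 1)` does not depend on the position of `a`; as `Gⁿ` is generated by
such single-coordinate elements, every class mod `N` has a representative `(a, 1, …, 1)`.
Putting `a` and `b` in two different coordinates shows that their classes commute, so `[G, G]`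
dies mod `N`. Conversely, the product of the coordinates in `Gᵃᵇ` is a homomorphism on
`Gⁿ ⋊ Sₙ` that kills `Sₙ`, hence `N`, and it sends `(a, 1, …, 1)` to the class of `a`.
-/

open SemidirectProduct

/-- The permutation action of `Sₙ` on `Gⁿ`: `σ • g = g ∘ σ⁻¹`. -/
def permHom (G : Type*) [Group G] (n : ℕ) :
    Equiv.Perm (Fin n) →* MulAut (Fin n → G) where
  toFun σ := MulEquiv.arrowCongr σ (MulEquiv.refl G)
  map_one' := by ext f i; rfl
  map_mul' σ τ := by ext f i; rfl

/-- The semidirect product `Gⁿ ⋊ Sₙ` for the permutation action. -/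
abbrev SDP (G : Type*) [Group G] (n : ℕ) :=
  (Fin n → G) ⋊[permHom G n] Equiv.Perm (Fin n)

/-- The normal closure of the canonical copy of `Sₙ` inside `Gⁿ ⋊ Sₙ`. -/
def Ncl (G : Type*) [Group G] (n : ℕ) : Subgroup (SDP G n) :=
  Subgroup.normalClosure
    (Set.range (SemidirectProduct.inr (φ := permHom G n)))

instance (G : Type*) [Group G] (n : ℕ) : (Ncl G n).Normal :=
  Subgroup.normalClosure_normal

section

variable {G : Type*} [Group G] {n : ℕ}

lemma permHom_mulSingle (σ : Equiv.Perm (Fin n)) (i : Fin n) (a : G) :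
    permHom G n σ (Pi.mulSingle i a) = Pi.mulSingle (σ i) a := by
  funext j
  change (Pi.mulSingle i a : Fin n → G) (σ.symm j) = (Pi.mulSingle (σ i) a : Fin n → G) j
  simp only [Pi.mulSingle_apply, Equiv.symm_apply_eq]

lemma mk_inr_eq_one (σ : Equiv.Perm (Fin n)) :
    ((inr σ : SDP G n) : SDP G n ⧸ Ncl G n) = 1 :=
  (QuotientGroup.eq_one_iff _).mpr (Subgroup.subset_normalClosure ⟨σ, rfl⟩)

lemma mk_inl_permHom (σ : Equiv.Perm (Fin n)) (g : Fin n → G) :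
    ((inl (permHom G n σ g) : SDP G n) : SDP G n ⧸ Ncl G n) = (inl g : SDP G n) := by
  rw [inl_aut, QuotientGroup.mk_mul, QuotientGroup.mk_mul, mk_inr_eq_one, mk_inr_eq_one,
    one_mul, mul_one]

variable (G) in
def mkSingle (i : Fin n) : G →* SDP G n ⧸ Ncl G n :=
  (QuotientGroup.mk' (Ncl G n)).comp
    ((inl (φ := permHom G n)).comp (MonoidHom.mulSingle (fun _ => G) i))

lemma mkSingle_apply (i : Fin n) (a : G) :
    mkSingle G i a = ((inl (Pi.mulSingle i a) : SDP G n) : SDP G n ⧸ Ncl G n) := rfl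

lemma mkSingle_eq_mkSingle (i j : Fin n) (a : G) : mkSingle G i a = mkSingle G j a := by
  rw [mkSingle_apply, mkSingle_apply, ← mk_inl_permHom (Equiv.swap i j), permHom_mulSingle,
    Equiv.swap_apply_left]

lemma commute_mkSingle_of_ne {i j : Fin n} (hij : i ≠ j) (a b : G) :
    Commute (mkSingle G i a) (mkSingle G j b) := by
  simp only [Commute, SemiconjBy, mkSingle_apply, ← QuotientGroup.mk_mul, ← map_mul]
  rw [(Pi.mulSingle_commute (f := fun _ : Fin n => G) hij a b).eq]

lemma commutator_le_ker_mkSingle [Nontrivial (Fin n)] (i : Fin n) :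
    commutator G ≤ (mkSingle G i).ker := by
  obtain ⟨j, hji⟩ := exists_ne i
  rw [commutator, Subgroup.commutator_le]
  intro a _ b _
  rw [MonoidHom.mem_ker, map_commutatorElement, commutatorElement_eq_one_iff_commute,
    mkSingle_eq_mkSingle i j b]
  exact commute_mkSingle_of_ne hji.symm a b

variable (G n) in
def abelianizedProd : SDP G n →* Abelianization G where
  toFun x := ∏ i, Abelianization.of (x.left i)
  map_one' := by simp
  map_mul' x y := by
    change ∏ i, Abelianization.of (x.left i * y.left (x.right.symm i)) = _
    simp only [map_mul, Finset.prod_mul_distrib]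
    rw [Equiv.prod_comp x.right.symm fun i => Abelianization.of (y.left i)]

lemma Ncl_le_ker_abelianizedProd : Ncl G n ≤ (abelianizedProd G n).ker := by
  refine Subgroup.normalClosure_le_normal ?_
  rintro _ ⟨σ, rfl⟩
  simp [abelianizedProd]

lemma abelianizedProd_inl_mulSingle (i : Fin n) (a : G) :
    abelianizedProd G n (inl (Pi.mulSingle i a)) = Abelianization.of a := by
  rw [abelianizedProd, MonoidHom.coe_mk, OneHom.coe_mk, Finset.prod_eq_single i]
  · simp
  · intro j _ hj
    simp [hj]
  · simp

lemma ker_mkSingle [Nontrivial (Fin n)] (i : Fin n) : (mkSingle G i).ker = commutator G := by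
  refine le_antisymm (fun a ha => ?_) (commutator_le_ker_mkSingle i)
  have hN : (inl (Pi.mulSingle i a) : SDP G n) ∈ Ncl G n :=
    (QuotientGroup.eq_one_iff _).mp (MonoidHom.mem_ker.mp ha)
  have := Ncl_le_ker_abelianizedProd hN
  rwa [MonoidHom.mem_ker, abelianizedProd_inl_mulSingle, ← MonoidHom.mem_ker,
    Abelianization.ker_of] at this

lemma mk_inl_mem_range_mkSingle (i : Fin n) (g : Fin n → G) :
    ((inl g : SDP G n) : SDP G n ⧸ Ncl G n) ∈ (mkSingle G i).range := by
  let H := (mkSingle G i).range.comap ((QuotientGroup.mk' (Ncl G n)).comp inl)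
  refine Subgroup.pi_mem_of_mulSingle_mem (H := H) g fun j => ⟨g j, ?_⟩
  exact (mkSingle_eq_mkSingle i j (g j)).trans (mkSingle_apply j (g j))

end

theorem mod_N_classification (G : Type*) [Group G] (n : ℕ) (hn : 2 ≤ n) :
    (∀ g : Fin n → G, ∃ g0 : G,
        ((⟨g, 1⟩ : SDP G n) : SDP G n ⧸ Ncl G n) =
          ((⟨fun i => if i = (⟨0, by omega⟩ : Fin n) then g0 else 1, 1⟩ :
              SDP G n) : SDP G n ⧸ Ncl G n)) ∧
    (∀ g h : G,
        ((⟨fun i => if i = (⟨0, by omega⟩ : Fin n) then g else 1, 1⟩ :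
            SDP G n) : SDP G n ⧸ Ncl G n) =
          ((⟨fun i => if i = (⟨0, by omega⟩ : Fin n) then h else 1, 1⟩ :
              SDP G n) : SDP G n ⧸ Ncl G n) ↔ g⁻¹ * h ∈ commutator G) := by
  have : Nontrivial (Fin n) := Fin.nontrivial_iff_two_le.mpr hn
  set i₀ : Fin n := ⟨0, by omega⟩
  have mk_ite : ∀ a : G, ((⟨fun i => if i = i₀ then a else 1, 1⟩ : SDP G n) :
      SDP G n ⧸ Ncl G n) = mkSingle G i₀ a := fun a => by
    rw [mkSingle_apply]
    congr
    funext i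
    rw [Pi.mulSingle_apply]
  refine ⟨fun g => ?_, fun g h => ?_⟩
  · obtain ⟨g₀, hg₀⟩ := mk_inl_mem_range_mkSingle i₀ g
    exact ⟨g₀, by rw [mk_ite, hg₀]; rfl⟩
  · rw [mk_ite, mk_ite, eq_comm, MonoidHom.eq_iff, ker_mkSingle]
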